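/- Let T₁ = {v ∈ ℤ⁶ : Q₂(v) ∈ 2ℤ} be the even sublattice of the odd unimodular lattice (ℤ⁶, Q₂). Then T₁ has index 2 in ℤ⁶, and there exists a ℤ-linear bijection φ : ℤ⁶ → T₁ such that B₂(φ(x), φ(y)) = xᵀ·G₁·y for all x, y ∈ ℤ⁶; that is, T₁ with the restricted bilinear form is isometric to U ⊥ U ⊥ ⟨−2⟩ ⊥ ⟨−2⟩. -/
import Mathlib

open Matrix

/-- The quadratic form `Q₂(x) = x₁² + x₂² − x₃² − x₄² − x₅² − x₆²` on `ℤ⁶`. -/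
def Q2 (v : Fin 6 → ℤ) : ℤ :=
  v 0 ^ 2 + v 1 ^ 2 - v 2 ^ 2 - v 3 ^ 2 - v 4 ^ 2 - v 5 ^ 2

/-- The associated bilinear form `B₂`. -/
def B2 (v w : Fin 6 → ℤ) : ℤ :=
  v 0 * w 0 + v 1 * w 1 - v 2 * w 2 - v 3 * w 3 - v 4 * w 4 - v 5 * w 5

/-- The even sublattice `T₁ = {v ∈ ℤ⁶ : Q₂(v) ∈ 2ℤ}`. -/
def T1 : AddSubgroup (Fin 6 → ℤ) where
  carrier := {v | ∃ n : ℤ, Q2 v = 2 * n}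
  zero_mem' := ⟨0, by simp [Q2]⟩
  add_mem' := by
    rintro a b ⟨m, hm⟩ ⟨n, hn⟩
    exact ⟨m + n + B2 a b, by
      simp only [Q2, B2, Pi.add_apply] at *
      linear_combination hm + hn⟩
  neg_mem' := by
    rintro a ⟨n, hn⟩
    exact ⟨n, by
      simp only [Q2, Pi.neg_apply] at *
      linear_combination hn⟩

/-- The Gram matrix of `U ⊥ U ⊥ ⟨−2⟩ ⊥ ⟨−2⟩`. -/
def G1 : Matrix (Fin 6) (Fin 6) ℤ :=
  !![0, 1, 0, 0, 0, 0;
     1, 0, 0, 0, 0, 0;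
     0, 0, 0, 1, 0, 0;
     0, 0, 1, 0, 0, 0;
     0, 0, 0, 0, -2, 0;
     0, 0, 0, 0, 0, -2]

lemma vec6_5 {α : Type*} (a b c d e f : α) : ![a, b, c, d, e, f] 5 = f := rfl

lemma cons5 {α : Type*} (a : α) (u : Fin 5 → α) : Matrix.vecCons a u 5 = u 4 := rfl

/-- The underlying function of the isometry. -/
def phiFun (x : Fin 6 → ℤ) : Fin 6 → ℤ :=
  ![x 0 - x 2 - x 3 - x 4 - x 5,
    x 1 + x 2 + x 3 + x 4 + x 5,
    x 0 - x 1 - x 2 - x 3 - x 4 - x 5,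
    -x 2 - x 4 - x 5,
    -x 3 - x 4 - x 5,
    -x 4 + x 5]

/-- The isometry as a linear map. -/
def phiL : (Fin 6 → ℤ) →ₗ[ℤ] (Fin 6 → ℤ) where
  toFun := phiFun
  map_add' x y := by
    funext i
    fin_cases i <;> simp [phiFun, vec6_5] <;> ring
  map_smul' c x := by
    funext i
    fin_cases i <;> simp [phiFun, vec6_5] <;> ring

lemma sq_lin (m : ℤ) : ∃ a : ℤ, m ^ 2 = m + 2 * a := by
  obtain ⟨a, ha⟩ := Int.even_mul_succ_self (m - 1)
  exact ⟨a, by linear_combination ha⟩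

lemma dotG (x y : Fin 6 → ℤ) : x ⬝ᵥ G1.mulVec y =
    x 0 * y 1 + x 1 * y 0 + x 2 * y 3 + x 3 * y 2 - 2 * (x 4 * y 4) - 2 * (x 5 * y 5) := by
  simp [G1, mulVec, dotProduct, Fin.sum_univ_six, vec6_5, cons5, Matrix.vecHead, Matrix.vecTail]
  ring

/-- The even sublattice of the odd unimodular lattice of signature `(2,4)` has index 2
and, with the restricted bilinear form, is isometric to `U ⊥ U ⊥ ⟨−2⟩ ⊥ ⟨−2⟩`. -/
theorem even_sublattice_index_two_and_isometric :
    T1.index = 2 ∧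
    ∃ φ : (Fin 6 → ℤ) →ₗ[ℤ] (Fin 6 → ℤ),
      Function.Injective φ ∧
      Set.range φ = (T1 : Set (Fin 6 → ℤ)) ∧
      ∀ x y : Fin 6 → ℤ, B2 (φ x) (φ y) = x ⬝ᵥ G1.mulVec y := by
  have hmem : ∀ v : Fin 6 → ℤ, v ∈ T1 ↔ ∃ n : ℤ, Q2 v = 2 * n := fun _ => Iff.rfl
  constructor
  · rw [AddSubgroup.index_eq_two_iff]
    refine ⟨![1, 0, 0, 0, 0, 0], fun b => ?_⟩
    have h1 : Q2 (b + ![1, 0, 0, 0, 0, 0]) = Q2 b + 2 * b 0 + 1 := by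
      simp [Q2, vec6_5]
      ring
    rcases Int.even_or_odd (Q2 b) with ⟨m, hm⟩ | ⟨m, hm⟩
    · refine Or.inr ⟨(hmem b).mpr ⟨m, by omega⟩, fun h => ?_⟩
      obtain ⟨n, hn⟩ := (hmem _).mp h
      omega
    · refine Or.inl ⟨(hmem _).mpr ⟨b 0 + m + 1, by omega⟩, fun h => ?_⟩
      obtain ⟨n, hn⟩ := (hmem b).mp h
      omega
  · refine ⟨phiL, ?_, ?_, ?_⟩
    · intro x y h
      have hc : ∀ i, phiFun x i = phiFun y i := fun i => congrFun h i
      have h0 := hc 0; have h1 := hc 1; have h2 := hc 2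
      have h3 := hc 3; have h4 := hc 4; have h5 := hc 5
      simp [phiFun, vec6_5] at h0 h1 h2 h3 h4 h5
      funext i
      fin_cases i <;> simp <;> omega
    · ext v
      simp only [Set.mem_range, SetLike.mem_coe]
      constructor
      · rintro ⟨x, rfl⟩
        refine (hmem _).mpr ⟨x 0 * x 1 + x 2 * x 3 - x 4 ^ 2 - x 5 ^ 2, ?_⟩
        show Q2 (phiFun x) = _
        simp [Q2, phiFun, vec6_5]
        ring
      · intro hv
        obtain ⟨n, hn⟩ := (hmem v).mp hv
        obtain ⟨a0, h0⟩ := sq_lin (v 0)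
        obtain ⟨a1, h1⟩ := sq_lin (v 1)
        obtain ⟨a2, h2⟩ := sq_lin (v 2)
        obtain ⟨a3, h3⟩ := sq_lin (v 3)
        obtain ⟨a4, h4⟩ := sq_lin (v 4)
        obtain ⟨a5, h5⟩ := sq_lin (v 5)
        simp only [Q2] at hn
        have hk : v 0 + v 1 + v 2 + v 3 + v 4 + v 5
            = 2 * (n - a0 - a1 + a2 + a3 + a4 + a5 + v 2 + v 3 + v 4 + v 5) := by
          linear_combination hn - h0 - h1 + h2 + h3 + h4 + h5
        set k : ℤ := n - a0 - a1 + a2 + a3 + a4 + a5 + v 2 + v 3 + v 4 + v 5 with hkdef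
        refine ⟨![v 1 + v 2, v 0 - v 2, -v 0 + v 1 + v 2 + v 4,
                  -v 0 + v 1 + v 2 + v 3, v 0 - k, v 0 + v 5 - k], ?_⟩
        show phiFun _ = v
        funext i
        fin_cases i <;> simp [phiFun, vec6_5] <;> omega
    · intro x y
      rw [dotG]
      show B2 (phiFun x) (phiFun y) = _
      simp [B2, phiFun, vec6_5]
      ring
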